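/- Let H be a finite dimensional cocommutative Hopf algebra and A a commutative H-module algebra with comodule structure ρ : A → A ⊗ H*. Then for each a ∈ A, all coefficients of the characteristic polynomial of the multiplication operator by ρ(a) on the free A-module A ⊗ H* lie in A^H. In particular, A is integral over A^H. -/

import Mathlib

set_option synthInstance.maxHeartbeats 1000000
set_option maxHeartbeats 4000000
set_option linter.unusedSectionVars false


open TensorProduct

variable {k : Type*} [Field k]
variable {K : Type*} [CommRing K] [HopfAlgebra k K] [FiniteDimensional k K]
variable {A : Type*} [CommRing A] [Algebra k A]

/-- `ρ` makes `A` into a (right) `K`-comodule algebra; for `K = H*` the dual of a finite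
dimensional Hopf algebra `H`, this is the same thing as an `H`-module algebra structure,
with `ρ(a)(h) = ha` under `A ⊗ H* ≅ Hom(H, A)`. -/
structure IsComoduleAlgebra (ρ : A →ₐ[k] A ⊗[k] K) : Prop where
  coassoc : ∀ a : A,
    (TensorProduct.assoc k A K K) ((TensorProduct.map ρ.toLinearMap LinearMap.id) (ρ a)) =
      (TensorProduct.map LinearMap.id (Coalgebra.comul (R := k) (A := K))) (ρ a)
  counit_id : ∀ a : A,
    (TensorProduct.rid k A)
      ((TensorProduct.map LinearMap.id (Coalgebra.counit (R := k) (A := K))) (ρ a)) = a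

/-- The subalgebra of coinvariants `A^{co K}`; for `K = H*` this is the invariant
subalgebra `A^H`. -/
def coinvariants (ρ : A →ₐ[k] A ⊗[k] K) : Subalgebra k A where
  carrier := {a | ρ a = a ⊗ₜ[k] 1}
  one_mem' := by
    simp only [Set.mem_setOf_eq, map_one, Algebra.TensorProduct.one_def]
  mul_mem' := by
    intro a b ha hb
    simp only [Set.mem_setOf_eq] at ha hb ⊢
    rw [map_mul, ha, hb, Algebra.TensorProduct.tmul_mul_tmul, mul_one]
  add_mem' := by
    intro a b ha hb
    simp only [Set.mem_setOf_eq] at ha hb ⊢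
    rw [map_add, ha, hb, TensorProduct.add_tmul]
  algebraMap_mem' := by
    intro r
    show ρ (algebraMap k A r) = (algebraMap k A r) ⊗ₜ[k] 1
    rw [AlgHom.commutes, Algebra.TensorProduct.algebraMap_apply]

set_option synthInstance.maxHeartbeats 1000000
set_option maxHeartbeats 4000000
set_option linter.unusedSectionVars false

section Aux
variable {k : Type*} [Field k]
variable {K : Type*} [CommRing K] [HopfAlgebra k K] [FiniteDimensional k K]

open Coalgebra HopfAlgebra LinearMap

/-- `x ⊗ y ↦ ∑ x y₁ ⊗ y₂`. -/
noncomputable def myW (k K : Type*) [Field k] [CommRing K] [HopfAlgebra k K] :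
    K ⊗[k] K →ₗ[k] K ⊗[k] K :=
  (LinearMap.mul' k K).rTensor K ∘ₗ (TensorProduct.assoc k K K K).symm.toLinearMap ∘ₗ
    (Coalgebra.comul (R := k) (A := K)).lTensor K

/-- `x ⊗ y ↦ ∑ x S(y₁) ⊗ y₂`. -/
noncomputable def myW' (k K : Type*) [Field k] [CommRing K] [HopfAlgebra k K] :
    K ⊗[k] K →ₗ[k] K ⊗[k] K :=
  (LinearMap.mul' k K).rTensor K ∘ₗ (TensorProduct.assoc k K K K).symm.toLinearMap ∘ₗ
    ((HopfAlgebra.antipode (R := k) (A := K)).rTensor K).lTensor K ∘ₗ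
    (Coalgebra.comul (R := k) (A := K)).lTensor K

lemma myW_tmul (x y : K) :
    myW k K (x ⊗ₜ[k] y) = (LinearMap.mulLeft k x).rTensor K (Coalgebra.comul (R := k) y) := by
  have : ∀ t : K ⊗[k] K,
      (LinearMap.mul' k K).rTensor K ((TensorProduct.assoc k K K K).symm (x ⊗ₜ t)) =
        (LinearMap.mulLeft k x).rTensor K t := by
    intro t
    induction t using TensorProduct.induction_on with
    | zero => simp only [tmul_zero, map_zero]
    | tmul u v => simp
    | add u v hu hv => simp [tmul_add, hu, hv]
  simp only [myW, LinearMap.comp_apply, lTensor_tmul, LinearEquiv.coe_coe]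
  exact this _

lemma myW'_tmul (x y : K) :
    myW' k K (x ⊗ₜ[k] y) = (LinearMap.mulLeft k x).rTensor K
      ((HopfAlgebra.antipode (R := k)).rTensor K (Coalgebra.comul (R := k) y)) := by
  have : ∀ t : K ⊗[k] K,
      (LinearMap.mul' k K).rTensor K ((TensorProduct.assoc k K K K).symm (x ⊗ₜ t)) =
        (LinearMap.mulLeft k x).rTensor K t := by
    intro t
    induction t using TensorProduct.induction_on with
    | zero => simp only [tmul_zero, map_zero]
    | tmul u v => simp
    | add u v hu hv => simp [tmul_add, hu, hv]
  simp only [myW', LinearMap.comp_apply, lTensor_tmul, LinearEquiv.coe_coe]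
  rw [← lTensor_tmul K (f := (HopfAlgebra.antipode (R := k)).rTensor K)]
  exact this _

end Aux

section Aux2
variable {k : Type*} [Field k]
variable {K : Type*} [CommRing K] [HopfAlgebra k K] [FiniteDimensional k K]

open Coalgebra HopfAlgebra LinearMap

noncomputable def myF (k K : Type*) [Field k] [CommRing K] [HopfAlgebra k K] :
    (K ⊗[k] K) ⊗[k] K →ₗ[k] K ⊗[k] K :=
  (LinearMap.mul' k K).rTensor K ∘ₗ (TensorProduct.assoc k K K K).symm.toLinearMap ∘ₗ
    ((HopfAlgebra.antipode (R := k) (A := K)).rTensor K).lTensor K ∘ₗ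
    (TensorProduct.assoc k K K K).toLinearMap

lemma myF_tmul (t : K ⊗[k] K) (c : K) :
    myF k K (t ⊗ₜ[k] c) =
      (LinearMap.mul' k K ((HopfAlgebra.antipode (R := k) (A := K)).lTensor K t)) ⊗ₜ[k] c := by
  induction t using TensorProduct.induction_on with
  | zero => simp only [zero_tmul, map_zero, tmul_zero]
  | tmul u v => simp [myF]
  | add u v hu hv => simp only [add_tmul, map_add, hu, hv, tmul_add]

lemma myW'_comul (y : K) : myW' k K (Coalgebra.comul (R := k) y) = (1 : K) ⊗ₜ[k] y := by
  classical
  set r := Coalgebra.Repr.arbitrary k y with hrdef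
  have h0 : myW' k K (Coalgebra.comul (R := k) y) =
      myF k K ((Coalgebra.comul (R := k) (A := K)).rTensor K (Coalgebra.comul (R := k) y)) := by
    rw [myW', myF]
    simp only [LinearMap.comp_apply, LinearEquiv.coe_coe]
    rw [Coalgebra.coassoc_apply]
  calc myW' k K (Coalgebra.comul (R := k) y)
      = myF k K ((Coalgebra.comul (R := k) (A := K)).rTensor K (Coalgebra.comul (R := k) y)) := h0
    _ = ∑ i ∈ r.index, myF k K ((Coalgebra.comul (R := k) (r.left i)) ⊗ₜ[k] r.right i) := by
        rw [← r.eq, map_sum, map_sum]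
        simp only [LinearMap.rTensor_tmul]
    _ = ∑ i ∈ r.index, (algebraMap k K (Coalgebra.counit (R := k) (r.left i))) ⊗ₜ[k] r.right i := by
        refine Finset.sum_congr rfl fun i _ => ?_
        rw [myF_tmul, HopfAlgebra.mul_antipode_lTensor_comul_apply]
    _ = (1 : K) ⊗ₜ[k] y := by
        have h2 := Coalgebra.sum_counit_tmul_eq (R := k) (A := K) r
        have h3 := congrArg ((Algebra.linearMap k K).rTensor K) h2
        rw [map_sum] at h3
        simp only [LinearMap.rTensor_tmul, Algebra.linearMap_apply, map_one] at h3
        exact h3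

lemma myW'_mulLeft (x : K) (s : K ⊗[k] K) :
    myW' k K ((LinearMap.mulLeft k x).rTensor K s) =
      (LinearMap.mulLeft k x).rTensor K (myW' k K s) := by
  induction s using TensorProduct.induction_on with
  | zero => simp only [map_zero]
  | tmul u v =>
      rw [LinearMap.rTensor_tmul, myW'_tmul, myW'_tmul, LinearMap.mulLeft_apply,
        LinearMap.mulLeft_mul, LinearMap.rTensor_comp, LinearMap.comp_apply]
  | add u v hu hv => simp only [map_add, hu, hv]

lemma myW'_myW (t : K ⊗[k] K) : myW' k K (myW k K t) = t := by
  induction t using TensorProduct.induction_on with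
  | zero => simp only [map_zero]
  | tmul x y =>
      rw [myW_tmul, myW'_mulLeft, myW'_comul, LinearMap.rTensor_tmul,
        LinearMap.mulLeft_apply, mul_one]
  | add u v hu hv => simp only [map_add, hu, hv]

lemma myW_bijective : Function.Bijective (myW k K) := by
  have hinj : Function.Injective (myW k K) :=
    Function.LeftInverse.injective (g := myW' k K) myW'_myW
  exact ⟨hinj, (LinearMap.injective_iff_surjective).mp hinj⟩

end Aux2

section Aux3
variable {k : Type*} [Field k]
variable {K : Type*} [CommRing K] [HopfAlgebra k K] [FiniteDimensional k K]
variable {A : Type*} [CommRing A] [Algebra k A]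

open Coalgebra HopfAlgebra LinearMap

/-- `(a ⊗ x) ⊗ y ↦ ∑ (a ⊗ x y₁) ⊗ y₂` as an `A ⊗ K`-algebra map. -/
noncomputable def myPhi (k A K : Type*) [Field k] [CommRing K] [HopfAlgebra k K]
    [CommRing A] [Algebra k A] :
    ((A ⊗[k] K) ⊗[k] K) →ₐ[A ⊗[k] K] ((A ⊗[k] K) ⊗[k] K) :=
  Algebra.TensorProduct.lift (Algebra.TensorProduct.includeLeft (S := A ⊗[k] K))
    (((Algebra.TensorProduct.assoc k k k A K K).symm.toAlgHom).comp
      ((Algebra.TensorProduct.includeRight).comp (Bialgebra.comulAlgHom k K)))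
    (fun x y => Commute.all _ _)

lemma myPhi_core (a : A) (x : K) (t : K ⊗[k] K) :
    ((a ⊗ₜ[k] x) ⊗ₜ[k] (1 : K)) * ((Algebra.TensorProduct.assoc k k k A K K).symm ((1 : A) ⊗ₜ[k] t)) =
      (TensorProduct.assoc k A K K).symm (a ⊗ₜ[k] ((LinearMap.mulLeft k x).rTensor K t)) := by
  induction t using TensorProduct.induction_on with
  | zero => simp only [tmul_zero, map_zero, mul_zero]
  | tmul u v =>
      rw [Algebra.TensorProduct.assoc_symm_tmul, LinearMap.rTensor_tmul,
        TensorProduct.assoc_symm_tmul, Algebra.TensorProduct.tmul_mul_tmul,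
        Algebra.TensorProduct.tmul_mul_tmul, LinearMap.mulLeft_apply, mul_one, one_mul]
  | add u v hu hv => simp only [tmul_add, map_add, mul_add, hu, hv]

lemma myPhi_eq (t : (A ⊗[k] K) ⊗[k] K) :
    myPhi k A K t =
      (TensorProduct.assoc k A K K).symm
        (((myW k K).lTensor A) (TensorProduct.assoc k A K K t)) := by
  induction t using TensorProduct.induction_on with
  | zero => simp only [map_zero]
  | add u v hu hv => simp only [map_add, hu, hv]
  | tmul w y =>
      induction w using TensorProduct.induction_on with
      | zero => simp only [zero_tmul, map_zero]
      | add w1 w2 h1 h2 => simp only [add_tmul, map_add, h1, h2]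
      | tmul a x =>
          rw [myPhi, Algebra.TensorProduct.lift_tmul, Algebra.TensorProduct.includeLeft_apply,
            AlgHom.comp_apply, AlgHom.comp_apply, Bialgebra.comulAlgHom_apply,
            Algebra.TensorProduct.includeRight_apply, AlgEquiv.toAlgHom_eq_coe,
            AlgEquiv.coe_toAlgHom, myPhi_core, TensorProduct.assoc_tmul, LinearMap.lTensor_tmul,
            myW_tmul]

lemma myPhi_bijective : Function.Bijective (myPhi k A K) := by
  have hl : Function.Bijective ((myW k K).lTensor A) := by
    have he : ((myW k K).lTensor A) =
        (LinearEquiv.lTensor A (LinearEquiv.ofBijective (myW k K) myW_bijective)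
          : A ⊗[k] (K ⊗[k] K) →ₗ[k] A ⊗[k] (K ⊗[k] K)) := by
      apply TensorProduct.ext'
      intro a s
      simp only [LinearMap.lTensor_tmul, LinearEquiv.coe_coe, LinearEquiv.lTensor_tmul]
      rfl
    rw [he]
    exact (LinearEquiv.lTensor A (LinearEquiv.ofBijective (myW k K) myW_bijective)).bijective
  have hfun : ⇑(myPhi k A K) =
      (⇑(TensorProduct.assoc k A K K).symm ∘ ⇑((myW k K).lTensor A) ∘
        ⇑(TensorProduct.assoc k A K K)) := funext myPhi_eq
  rw [hfun]
  exact ((TensorProduct.assoc k A K K).symm.bijective.comp hl).comp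
    (TensorProduct.assoc k A K K).bijective

/-- `myPhi` as a linear equivalence of `A ⊗ K`-modules. -/
noncomputable def myPhiL (k A K : Type*) [Field k] [CommRing K] [HopfAlgebra k K]
    [FiniteDimensional k K] [CommRing A] [Algebra k A] :
    ((A ⊗[k] K) ⊗[k] K) ≃ₗ[A ⊗[k] K] ((A ⊗[k] K) ⊗[k] K) :=
  LinearEquiv.ofBijective (myPhi k A K).toLinearMap myPhi_bijective

end Aux3

section Aux4
variable {k : Type*} [Field k]
variable {K : Type*} [CommRing K] [HopfAlgebra k K] [FiniteDimensional k K]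
variable {A : Type*} [CommRing A] [Algebra k A]

open Coalgebra HopfAlgebra LinearMap

lemma myPhiL_apply (t : (A ⊗[k] K) ⊗[k] K) : myPhiL k A K t = myPhi k A K t := rfl

lemma myPhi_incl (w : A ⊗[k] K) :
    myPhi k A K ((Algebra.TensorProduct.map
        (Algebra.TensorProduct.includeLeft : A →ₐ[k] A ⊗[k] K) (AlgHom.id k K)) w) =
      (TensorProduct.assoc k A K K).symm
        ((TensorProduct.map LinearMap.id (Coalgebra.comul (R := k) (A := K))) w) := by
  induction w using TensorProduct.induction_on with
  | zero => simp only [map_zero]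
  | add u v hu hv => simp only [map_add, hu, hv]
  | tmul a x =>
      rw [Algebra.TensorProduct.map_tmul, AlgHom.coe_id, id_eq,
        Algebra.TensorProduct.includeLeft_apply, myPhi, Algebra.TensorProduct.lift_tmul,
        Algebra.TensorProduct.includeLeft_apply, AlgHom.comp_apply, AlgHom.comp_apply,
        Bialgebra.comulAlgHom_apply, Algebra.TensorProduct.includeRight_apply,
        AlgEquiv.toAlgHom_eq_coe, AlgEquiv.coe_toAlgHom, myPhi_core, LinearMap.mulLeft_one,
        LinearMap.rTensor_id, LinearMap.id_apply, TensorProduct.map_tmul,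
        LinearMap.id_coe, id_eq]

lemma algHomTensorMap_eq {C : Type*} [CommRing C] [Algebra k C] (φ : A →ₐ[k] C)
    (w : A ⊗[k] K) :
    (Algebra.TensorProduct.map φ (AlgHom.id k K)) w =
      (TensorProduct.map φ.toLinearMap LinearMap.id) w := by
  induction w using TensorProduct.induction_on with
  | zero => simp only [map_zero]
  | add u v hu hv => simp only [map_add, hu, hv]
  | tmul a x => rw [Algebra.TensorProduct.map_tmul, TensorProduct.map_tmul]; rfl

lemma repr_map {C : Type*} [CommRing C] [Algebra k C] (φ : A →ₐ[k] C)
    {ι : Type*} (b : Module.Basis ι k K) (v : A ⊗[k] K) (i : ι) :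
    (Algebra.TensorProduct.basis C b).repr ((Algebra.TensorProduct.map φ (AlgHom.id k K)) v) i =
      φ ((Algebra.TensorProduct.basis A b).repr v i) := by
  induction v using TensorProduct.induction_on with
  | zero => simp only [map_zero, Finsupp.coe_zero, Pi.zero_apply]
  | add u v hu hv => simp only [map_add, Finsupp.coe_add, Pi.add_apply, hu, hv]
  | tmul a x =>
      rw [Algebra.TensorProduct.map_tmul, AlgHom.coe_id, id_eq,
        Algebra.TensorProduct.basis_repr_tmul, Algebra.TensorProduct.basis_repr_tmul]
      simp only [Finsupp.smul_apply, Finsupp.mapRange_apply, smul_eq_mul, map_mul,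
        AlgHom.commutes]

lemma toMatrix_mulLeft_map {C : Type*} [CommRing C] [Algebra k C] (φ : A →ₐ[k] C)
    {ι : Type*} [Fintype ι] [DecidableEq ι] (b : Module.Basis ι k K) (w : A ⊗[k] K) :
    LinearMap.toMatrix (Algebra.TensorProduct.basis C b) (Algebra.TensorProduct.basis C b)
        (LinearMap.mulLeft C ((Algebra.TensorProduct.map φ (AlgHom.id k K)) w)) =
      (LinearMap.toMatrix (Algebra.TensorProduct.basis A b) (Algebra.TensorProduct.basis A b)
        (LinearMap.mulLeft A w)).map ⇑φ := by
  ext i j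
  rw [Matrix.map_apply, LinearMap.toMatrix_apply, LinearMap.toMatrix_apply,
    Algebra.TensorProduct.basis_apply, Algebra.TensorProduct.basis_apply,
    LinearMap.mulLeft_apply, LinearMap.mulLeft_apply]
  have h1 : (Algebra.TensorProduct.map φ (AlgHom.id k K)) w * (1 : C) ⊗ₜ[k] b j =
      (Algebra.TensorProduct.map φ (AlgHom.id k K)) (w * (1 : A) ⊗ₜ[k] b j) := by
    have h0 : ((1 : C) ⊗ₜ[k] b j) =
        (Algebra.TensorProduct.map φ (AlgHom.id k K)) ((1 : A) ⊗ₜ[k] b j) := by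
      rw [Algebra.TensorProduct.map_tmul, map_one, AlgHom.coe_id, id_eq]
    rw [h0, ← map_mul]
  rw [h1, repr_map]

end Aux4

/-- let `H` be a finite dimensional cocommutative Hopf algebra over a
field `k`, i.e. `K = H*` is a finite dimensional commutative Hopf algebra, and let `A`
be a commutative `H`-module algebra (a `K`-comodule algebra) with structure map
`ρ : A → A ⊗ K`.  Then for each `a ∈ A` all coefficients of the characteristic
polynomial of the multiplication operator by `ρ(a)` on the free `A`-module `A ⊗ K` lie
in `A^H`; in particular `A` is integral over `A^H`. -/
theorem charpoly_coeff_invariant_of_cocommutative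
    (ρ : A →ₐ[k] A ⊗[k] K) (hco : IsComoduleAlgebra ρ) :
    (∀ a : A, ∀ i : ℕ,
      ((LinearMap.mulLeft A (ρ a)).charpoly.coeff i) ∈ coinvariants ρ) ∧
    Algebra.IsIntegral ↥(coinvariants ρ) A := by
  classical
  have key : ∀ a : A, ∀ i : ℕ,
      ((LinearMap.mulLeft A (ρ a)).charpoly.coeff i) ∈ coinvariants ρ := by
    intro a i
    show ρ ((LinearMap.mulLeft A (ρ a)).charpoly.coeff i) =
      ((LinearMap.mulLeft A (ρ a)).charpoly.coeff i) ⊗ₜ[k] 1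
    rcases subsingleton_or_nontrivial A with hA | hA
    · haveI := Module.subsingleton A (A ⊗[k] K)
      exact Subsingleton.elim _ _
    haveI : Nontrivial K := nontrivial_of_ne 1 0 fun h => one_ne_zero (α := k)
      (by rw [← Bialgebra.counit_one (R := k) (A := K), h, map_zero])
    haveI : Nonempty (Fin (Module.finrank k K)) :=
      Fin.pos_iff_nonempty.mp Module.finrank_pos
    haveI : Nontrivial (A ⊗[k] K) :=
      Equiv.nontrivial (Algebra.TensorProduct.basis A (Module.finBasis k K)).repr.toEquiv
    set b := Module.finBasis k K with hb
    have e1 := LinearMap.charpoly_toMatrix (LinearMap.mulLeft A (ρ a))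
      (Algebra.TensorProduct.basis A b)
    set M := LinearMap.toMatrix (Algebra.TensorProduct.basis A b)
      (Algebra.TensorProduct.basis A b) (LinearMap.mulLeft A (ρ a)) with hM
    have hu : myPhi k A K ((Algebra.TensorProduct.map
        (Algebra.TensorProduct.includeLeft : A →ₐ[k] A ⊗[k] K) (AlgHom.id k K)) (ρ a)) =
        (Algebra.TensorProduct.map ρ (AlgHom.id k K)) (ρ a) := by
      rw [myPhi_incl, ← hco.coassoc a, LinearEquiv.symm_apply_apply, ← algHomTensorMap_eq]
    have hconj : LinearEquiv.conj (myPhiL k A K)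
        (LinearMap.mulLeft (A ⊗[k] K) ((Algebra.TensorProduct.map
          (Algebra.TensorProduct.includeLeft : A →ₐ[k] A ⊗[k] K) (AlgHom.id k K)) (ρ a))) =
        LinearMap.mulLeft (A ⊗[k] K) ((Algebra.TensorProduct.map ρ (AlgHom.id k K)) (ρ a)) := by
      apply LinearMap.ext
      intro t
      rw [LinearEquiv.conj_apply, LinearMap.comp_apply, LinearMap.comp_apply,
        LinearEquiv.coe_coe, LinearEquiv.coe_coe, LinearMap.mulLeft_apply,
        LinearMap.mulLeft_apply, myPhiL_apply, map_mul, hu]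
      congr 1
      rw [← myPhiL_apply, LinearEquiv.apply_symm_apply]
    have hcp : (LinearMap.mulLeft (A ⊗[k] K)
          ((Algebra.TensorProduct.map ρ (AlgHom.id k K)) (ρ a))).charpoly =
        (LinearMap.mulLeft (A ⊗[k] K) ((Algebra.TensorProduct.map
          (Algebra.TensorProduct.includeLeft : A →ₐ[k] A ⊗[k] K)
          (AlgHom.id k K)) (ρ a))).charpoly := by
      rw [← hconj, LinearEquiv.charpoly_conj]
    have hM1 : M.map ⇑ρ = LinearMap.toMatrix (Algebra.TensorProduct.basis (A ⊗[k] K) b)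
        (Algebra.TensorProduct.basis (A ⊗[k] K) b)
        (LinearMap.mulLeft (A ⊗[k] K) ((Algebra.TensorProduct.map ρ (AlgHom.id k K)) (ρ a))) :=
      (toMatrix_mulLeft_map ρ b (ρ a)).symm
    have hM2 : M.map ⇑(Algebra.TensorProduct.includeLeft : A →ₐ[k] A ⊗[k] K) =
        LinearMap.toMatrix (Algebra.TensorProduct.basis (A ⊗[k] K) b)
        (Algebra.TensorProduct.basis (A ⊗[k] K) b)
        (LinearMap.mulLeft (A ⊗[k] K) ((Algebra.TensorProduct.map
          (Algebra.TensorProduct.includeLeft : A →ₐ[k] A ⊗[k] K) (AlgHom.id k K)) (ρ a))) :=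
      (toMatrix_mulLeft_map _ b (ρ a)).symm
    calc ρ ((LinearMap.mulLeft A (ρ a)).charpoly.coeff i)
        = (((LinearMap.mulLeft A (ρ a)).charpoly).map ρ.toRingHom).coeff i :=
          (Polynomial.coeff_map _ _).symm
      _ = ((M.map ⇑ρ.toRingHom).charpoly).coeff i := by
          rw [Matrix.charpoly_map, e1]
      _ = ((M.map ⇑(Algebra.TensorProduct.includeLeftRingHom :
            A →+* A ⊗[k] K)).charpoly).coeff i := by
          have hc1 : ⇑ρ.toRingHom = ⇑ρ := rfl
          have hc2 : ⇑(Algebra.TensorProduct.includeLeftRingHom : A →+* A ⊗[k] K) =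
              ⇑(Algebra.TensorProduct.includeLeft : A →ₐ[k] A ⊗[k] K) := rfl
          rw [hc1, hc2, hM1, hM2, LinearMap.charpoly_toMatrix, LinearMap.charpoly_toMatrix, hcp]
      _ = (((LinearMap.mulLeft A (ρ a)).charpoly).map
            (Algebra.TensorProduct.includeLeftRingHom : A →+* A ⊗[k] K)).coeff i := by
          rw [Matrix.charpoly_map, e1]
      _ = ((LinearMap.mulLeft A (ρ a)).charpoly.coeff i) ⊗ₜ[k] 1 := by
          rw [Polynomial.coeff_map]
          rfl
  refine ⟨key, ?_⟩
  refine ⟨fun a => ?_⟩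
  set P := (LinearMap.mulLeft A (ρ a)).charpoly with hP
  have h0 : Polynomial.aeval (ρ a) P = 0 := by
    have hCH := LinearMap.aeval_self_charpoly (LinearMap.mulLeft A (ρ a))
    have h1 : Polynomial.aeval (LinearMap.mulLeft A (ρ a)) P =
        Algebra.lmul A (A ⊗[k] K) (Polynomial.aeval (ρ a) P) :=
      Polynomial.aeval_algHom_apply (Algebra.lmul A (A ⊗[k] K)) (ρ a) P
    apply Algebra.lmul_injective (R := A) (A := A ⊗[k] K)
    rw [map_zero, ← h1]
    exact hCH
  set π : A ⊗[k] K →ₐ[k] A := ((Algebra.TensorProduct.rid k k A).toAlgHom.comp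
    (Algebra.TensorProduct.map (AlgHom.id k A) (Bialgebra.counitAlgHom k K))) with hπ
  have hπtmul : ∀ (c : A) (x : K), π (c ⊗ₜ[k] x) = Coalgebra.counit (R := k) x • c := by
    intro c x
    rw [hπ, AlgHom.comp_apply, Algebra.TensorProduct.map_tmul, AlgHom.coe_id, id_eq,
      Bialgebra.counitAlgHom_apply, AlgEquiv.toAlgHom_eq_coe, AlgEquiv.coe_toAlgHom,
      Algebra.TensorProduct.rid_tmul]
  have hπρ : π (ρ a) = a := by
    have h3 : ∀ w : A ⊗[k] K, π w = (TensorProduct.rid k A)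
        ((TensorProduct.map LinearMap.id (Coalgebra.counit (R := k) (A := K))) w) := by
      intro w
      induction w using TensorProduct.induction_on with
      | zero => simp only [map_zero]
      | add u v hu hv => simp only [map_add, hu, hv]
      | tmul c x =>
          rw [hπtmul, TensorProduct.map_tmul, LinearMap.id_coe, id_eq, TensorProduct.rid_tmul]
    rw [h3, hco.counit_id a]
  have hπA : ∀ c : A, π ((algebraMap A (A ⊗[k] K)) c) = c := by
    intro c
    rw [Algebra.TensorProduct.algebraMap_apply, hπtmul, Bialgebra.counit_one, one_smul,
      Algebra.algebraMap_self, RingHom.id_apply]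
  have heval : Polynomial.eval a P = 0 := by
    have h4 := congrArg π h0
    rw [map_zero, Polynomial.aeval_eq_sum_range, map_sum] at h4
    rw [Polynomial.eval_eq_sum_range]
    calc ∑ i ∈ Finset.range (P.natDegree + 1), P.coeff i * a ^ i
        = ∑ i ∈ Finset.range (P.natDegree + 1), π (P.coeff i • ρ a ^ i) := by
          refine Finset.sum_congr rfl fun i _ => ?_
          rw [Algebra.smul_def, map_mul, hπA, map_pow, hπρ]
      _ = 0 := h4
  have hcoe : ∀ i : ℕ, P.coeff i ∈ coinvariants ρ := fun i => key a i
  refine ⟨∑ i ∈ Finset.range (P.natDegree + 1),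
    Polynomial.monomial i (⟨P.coeff i, hcoe i⟩ : ↥(coinvariants ρ)), ?hm, ?he⟩
  case hm =>
    have hQmap : (∑ i ∈ Finset.range (P.natDegree + 1),
        Polynomial.monomial i (⟨P.coeff i, hcoe i⟩ : ↥(coinvariants ρ))).map
          (algebraMap ↥(coinvariants ρ) A) = P := by
      rw [Polynomial.map_sum]
      simp only [Polynomial.map_monomial]
      exact (Polynomial.as_sum_range P).symm
    have hinj : Function.Injective (algebraMap ↥(coinvariants ρ) A) := fun x y h =>
      Subtype.ext h
    apply Polynomial.monic_of_injective hinj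
    rw [hQmap]
    exact LinearMap.charpoly_monic _
  case he =>
    have hQmap : (∑ i ∈ Finset.range (P.natDegree + 1),
        Polynomial.monomial i (⟨P.coeff i, hcoe i⟩ : ↥(coinvariants ρ))).map
          (algebraMap ↥(coinvariants ρ) A) = P := by
      rw [Polynomial.map_sum]
      simp only [Polynomial.map_monomial]
      exact (Polynomial.as_sum_range P).symm
    rw [← Polynomial.eval_map, hQmap]
    exact heval
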